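/- arXiv:2509.07926 — 4 statements merged into one kernel-verified Lean document; each statement's English description precedes it below -/
import Mathlib

section
/- Let k ≥ 3 be an integer. If D(2k,k) = {1}, then b(2k,k) = 2k − 2; and if D(2k,k) = {1,2}, then b(2k,k) = 2k − 3. -/
/-- `A` is a `k`-term cyclic arithmetic progression mod `N` with common difference `d`:
it is a `k`-element subset of `ZMod N` whose elements are `t, t+d, …, t+(k-1)d`. -/
def IsAPWith (N k : ℕ) (A : Finset (ZMod N)) (d : ZMod N) : Prop :=
  A.card = k ∧ ∃ t : ZMod N, A = (Finset.range k).image (fun i : ℕ => t + (i : ZMod N) * d)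

/-- `A` is a `k`-term cyclic arithmetic progression mod `N`. -/
def IsAP (N k : ℕ) (A : Finset (ZMod N)) : Prop :=
  ∃ d : ZMod N, IsAPWith N k A d

/-- `D(N,k)`: the set of values `gcd(d,k)` where `d` ranges over all `d ∈ {1,…,N-1}` that are
a common difference of some `k`-term cyclic arithmetic progression mod `N`. -/
def Ddiff (N k : ℕ) : Set ℕ :=
  {g | ∃ d : ℕ, 1 ≤ d ∧ d ≤ N - 1 ∧
    (∃ A : Finset (ZMod N), IsAPWith N k A (d : ZMod N)) ∧ g = Nat.gcd d k}

/-- `b(N,k)`: the maximum size of a subset of `ZMod N` containing no `k`-term cyclic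
arithmetic progression mod `N`. -/
noncomputable def bNum (N k : ℕ) : ℕ :=
  sSup {n | ∃ B : Finset (ZMod N), B.card = n ∧ ∀ A ⊆ B, ¬ IsAP N k A}

/-- `χ(N,k)`: the minimum number of parts needed to partition `ZMod N` into subsets none of
which contains a `k`-term cyclic arithmetic progression mod `N` (phrased via colorings). -/
noncomputable def chiNum (N k : ℕ) : ℕ :=
  sInf {r | ∃ c : ZMod N → Fin r, ∀ A : Finset (ZMod N), IsAP N k A → ¬ ∃ i, ∀ x ∈ A, c x = i}


/-!
Colour `ZMod (2k)` by the parity map to `ZMod 2`. A `k`-term progression with even difference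
stays in one parity class, which has exactly `k` elements, so it *is* that class. A progression
`t + i d` with odd difference `d` must have `d` a unit (otherwise its terms repeat before the
`k`-th one), so `t + a d = 0` for some `a < 2k`; as `k d = k`, either `a < k` or the term of index
`a - k` is `-k = k`. Either way the progression contains `0` or `k`. So removing `0`, `k` and an
odd element leaves a progression-free set, and when `k` is odd, `k` itself is that odd element.

Conversely, both parity classes are progressions of difference `2`, so a progression-free set
misses an even point `x` and an odd point `y`. If `k` is even and these are the only points it
misses, then `x - y` is odd, hence `≠ k`, so one of the two arcs between `x` and `y` has more
than `k` points and contains a run of `k` consecutive residues inside the set.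
-/

open Finset

def progression {N : ℕ} (k : ℕ) (t d : ZMod N) : Finset (ZMod N) :=
  (range k).image fun i : ℕ => t + i * d

def APFree (N k : ℕ) (B : Finset (ZMod N)) : Prop :=
  ∀ A ⊆ B, ¬ IsAP N k A

section Progression

variable {N k : ℕ}

lemma mem_progression {t d x : ZMod N} : x ∈ progression k t d ↔ ∃ i < k, t + i * d = x := by
  simp [progression]

lemma card_progression_eq_iff {t d : ZMod N} :
    (progression k t d).card = k ↔ Set.InjOn (fun i : ℕ => t + i * d) (range k) := by
  rw [progression, ← card_image_iff, card_range]

lemma card_progression_of_mul_val_le {d : ZMod N} (hd : 0 < d.val)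
    (hkd : k * d.val ≤ N) (t : ZMod N) : (progression k t d).card = k := by
  have hval : ∀ i < k, ((i : ZMod N) * d).val = i * d.val := fun i hi => by
    have hlt : i * d.val < N := (Nat.mul_lt_mul_of_pos_right hi hd).trans_le hkd
    rw [ZMod.val_mul, ZMod.val_cast_of_lt ((Nat.le_mul_of_pos_right i hd).trans_lt hlt),
      Nat.mod_eq_of_lt hlt]
  rw [card_progression_eq_iff]
  intro i hi j hj hij
  rw [coe_range, Set.mem_Iio] at hi hj
  have := congrArg ZMod.val (add_left_cancel hij)
  rw [hval i hi, hval j hj] at this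
  exact Nat.eq_of_mul_eq_mul_right hd this

lemma isAPWith_progression {d : ZMod N} (hd : 0 < d.val) (hkd : k * d.val ≤ N)
    (t : ZMod N) : IsAPWith N k (progression k t d) d :=
  ⟨card_progression_of_mul_val_le hd hkd t, t, rfl⟩

lemma le_addOrderOf_of_card_progression [NeZero N] {t d : ZMod N}
    (h : (progression k t d).card = k) : k ≤ addOrderOf d := by
  by_contra! hlt
  have hcoll : t + (addOrderOf d : ℕ) * d = t + ((0 : ℕ) : ZMod N) * d := by
    rw [← nsmul_eq_mul, addOrderOf_nsmul_eq_zero]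
    simp
  have := card_progression_eq_iff.mp h (by simpa using hlt) (by simpa using hlt.pos) hcoll
  exact (addOrderOf_pos d).ne' this

lemma progression_one_subset_compl [NeZero N] {p q : ZMod N} (hpq : k < (p - q).val) :
    progression k (q + 1) 1 ⊆ univ \ {p, q} := by
  intro x hx
  obtain ⟨i, hi, rfl⟩ := mem_progression.mp hx
  have hshift : q + 1 + (i : ZMod N) * 1 = q + ((i + 1 : ℕ) : ZMod N) := by push_cast; ring
  have hval : ((i + 1 : ℕ) : ZMod N).val = i + 1 :=
    ZMod.val_cast_of_lt (by have := ZMod.val_lt (p - q); omega)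
  simp only [hshift, mem_sdiff, mem_univ, mem_insert, mem_singleton, true_and, not_or]
  constructor
  · intro h
    have : (p - q).val = i + 1 := by rw [← h, add_sub_cancel_left, hval]
    omega
  · intro h
    have : ((i + 1 : ℕ) : ZMod N).val = 0 := by
      rw [(add_eq_left).mp h, ZMod.val_zero]
    omega

lemma APFree.exists_notMem {B A : Finset (ZMod N)} (hB : APFree N k B) (hA : IsAP N k A) :
    ∃ x ∈ A, x ∉ B :=
  not_subset.mp fun h => hB A h hA

lemma bNum_eq {m : ℕ} {B : Finset (ZMod N)} (hB : APFree N k B) (hcard : B.card = m)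
    (hmax : ∀ B' : Finset (ZMod N), APFree N k B' → B'.card ≤ m) : bNum N k = m :=
  IsGreatest.csSup_eq ⟨⟨B, hcard, hB⟩, by rintro _ ⟨B', rfl, hB'⟩; exact hmax B' hB'⟩

lemma dvd_of_mem_Ddiff {g : ℕ} (hg : g ∈ Ddiff N k) : g ∣ k := by
  obtain ⟨d, -, -, -, rfl⟩ := hg
  exact Nat.gcd_dvd_right d k

end Progression

lemma ZMod.two_eq_zero_or_one (r : ZMod 2) : r = 0 ∨ r = 1 := by
  revert r
  decide

section Parity

variable {k : ℕ}

def parity (k : ℕ) : ZMod (2 * k) →+* ZMod 2 :=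
  ZMod.castHom (dvd_mul_right 2 k) (ZMod 2)

lemma parity_natCast (n : ℕ) : parity k n = n :=
  map_natCast _ n

lemma odd_val_of_parity_eq_one [NeZero k] {d : ZMod (2 * k)} (hd : parity k d = 1) :
    Odd d.val := by
  rwa [← ZMod.natCast_eq_one_iff_odd, ← parity_natCast, ZMod.natCast_zmod_val]

lemma parity_of_mem_progression {n : ℕ} {t d x : ZMod (2 * k)} (hd : parity k d = 0)
    (hx : x ∈ progression n t d) : parity k x = parity k t := by
  obtain ⟨i, -, rfl⟩ := mem_progression.mp hx
  rw [map_add, map_mul, hd, mul_zero, add_zero]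

lemma card_filter_parity [NeZero k] (r : ZMod 2) :
    #{x : ZMod (2 * k) | parity k x = r} = k := by
  have hfiber : ∀ r : ZMod 2,
      #{x : ZMod (2 * k) | parity k x = r} = #{x : ZMod (2 * k) | parity k x = 0} := fun r =>
    AddMonoidHom.card_fiber_eq_of_mem_range (parity k)
      (ZMod.castHom_surjective _ r) (ZMod.castHom_surjective _ 0)
  have hsum : #{x : ZMod (2 * k) | parity k x = 0} + #{x : ZMod (2 * k) | parity k x = 1}
      = 2 * k := by
    have hnot (x : ZMod (2 * k)) : ¬parity k x = 0 ↔ parity k x = 1 := by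
      rcases ZMod.two_eq_zero_or_one (parity k x) with h | h <;> simp [h]
    simp_rw [← hnot]
    rw [card_filter_add_card_filter_not, card_univ, ZMod.card]
  rw [hfiber 1] at hsum
  rw [hfiber r]
  omega

lemma natCast_mul_eq_of_parity_eq_one [NeZero k] {d : ZMod (2 * k)}
    (hd : parity k d = 1) : (k : ZMod (2 * k)) * d = k := by
  obtain ⟨c, hc⟩ := odd_val_of_parity_eq_one hd
  have h2k : ((2 * k : ℕ) : ZMod (2 * k)) = 0 := ZMod.natCast_self _
  rw [← ZMod.natCast_zmod_val d, hc]
  push_cast at h2k ⊢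
  linear_combination c * h2k

lemma isUnit_of_card_progression [NeZero k] {t d : ZMod (2 * k)} (hd : parity k d = 1)
    (h : (progression k t d).card = k) : IsUnit d := by
  set g := (2 * k).gcd d.val
  have hord : k ≤ 2 * k / g := by
    rw [← ZMod.addOrderOf_coe _ (NeZero.ne _), ZMod.natCast_zmod_val]
    exact le_addOrderOf_of_card_progression h
  have hg_le : g ≤ 2 := by
    have : g * k ≤ 2 * k := (Nat.mul_le_mul_left g hord).trans (Nat.mul_div_le _ _)
    exact Nat.le_of_mul_le_mul_right this (Nat.pos_of_ne_zero (NeZero.ne k))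
  obtain ⟨c, hc⟩ : Odd g := (odd_val_of_parity_eq_one hd).of_dvd_nat (Nat.gcd_dvd_right _ _)
  rw [← ZMod.natCast_zmod_val d, ZMod.isUnit_iff_coprime, Nat.coprime_comm]
  show g = 1
  omega

lemma IsAPWith.eq_filter_parity_of_parity_eq_zero [NeZero k] {A : Finset (ZMod (2 * k))}
    {d : ZMod (2 * k)} (hA : IsAPWith (2 * k) k A d) (hd : parity k d = 0) :
    ∃ r, A = ({x | parity k x = r} : Finset _) := by
  obtain ⟨hcard, t, rfl⟩ := hA
  refine ⟨parity k t, eq_of_subset_of_card_le (fun x hx => ?_) ?_⟩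
  · exact mem_filter.mpr ⟨mem_univ x, parity_of_mem_progression hd hx⟩
  · rw [hcard, card_filter_parity]

lemma IsAPWith.zero_mem_or_natCast_mem_of_parity_eq_one [NeZero k] {A : Finset (ZMod (2 * k))}
    {d : ZMod (2 * k)} (hA : IsAPWith (2 * k) k A d) (hd : parity k d = 1) :
    0 ∈ A ∨ (k : ZMod (2 * k)) ∈ A := by
  obtain ⟨hcard, t, rfl⟩ := hA
  set a := (-t * d⁻¹).val
  have ha : t + a * d = 0 := by
    rw [ZMod.natCast_zmod_val, mul_assoc,
      ZMod.inv_mul_of_unit _ (isUnit_of_card_progression hd hcard)]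
    ring
  rcases lt_or_ge a k with hak | hka
  · exact Or.inl (mem_progression.mpr ⟨a, hak, ha⟩)
  · have ha_lt : a < 2 * k := ZMod.val_lt _
    refine Or.inr (mem_progression.mpr ⟨a - k, by omega, ?_⟩)
    have h2k : ((2 * k : ℕ) : ZMod (2 * k)) = 0 := ZMod.natCast_self _
    rw [Nat.cast_sub hka]
    push_cast at h2k
    linear_combination ha - natCast_mul_eq_of_parity_eq_one hd - h2k

lemma apFree_univ_sdiff [NeZero k] {S : Finset (ZMod (2 * k))} {z : ZMod (2 * k)}
    (h0 : 0 ∈ S) (hk : (k : ZMod (2 * k)) ∈ S) (hz : z ∈ S) (hz_odd : parity k z = 1) :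
    APFree (2 * k) k (univ \ S) := by
  rintro A hAS ⟨d, hA⟩
  have hnotMem : ∀ x ∈ A, x ∉ S := fun x hx => (mem_sdiff.mp (hAS hx)).2
  rcases ZMod.two_eq_zero_or_one (parity k d) with hd | hd
  · obtain ⟨r, rfl⟩ := hA.eq_filter_parity_of_parity_eq_zero hd
    rcases ZMod.two_eq_zero_or_one r with rfl | rfl
    · exact hnotMem 0 (by simp) h0
    · exact hnotMem z (by simp [hz_odd]) hz
  · rcases hA.zero_mem_or_natCast_mem_of_parity_eq_one hd with h | h
    · exact hnotMem _ h h0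
    · exact hnotMem _ h hk

lemma isAPWith_progression_one [NeZero k] (t : ZMod (2 * k)) :
    IsAPWith (2 * k) k (progression k t 1) 1 := by
  have hval : (1 : ZMod (2 * k)).val = 1 := by
    rw [ZMod.val_one_eq_one_mod, Nat.mod_eq_of_lt]
    have := NeZero.ne k
    omega
  exact isAPWith_progression (by rw [hval]; omega) (by rw [hval]; omega) t

lemma isAPWith_progression_two (hk : 2 ≤ k) (t : ZMod (2 * k)) :
    IsAPWith (2 * k) k (progression k t 2) 2 := by
  have : NeZero k := ⟨by omega⟩
  have hval : (2 : ZMod (2 * k)).val = 2 := by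
    rw [ZMod.val_two_eq_two_mod, Nat.mod_eq_of_lt (by omega)]
  exact isAPWith_progression (by rw [hval]; omega) (by rw [hval]; omega) t

lemma card_univ_sdiff_pair [NeZero k] {x y : ZMod (2 * k)} (hx : parity k x = 0)
    (hy : parity k y = 1) : (univ \ {x, y}).card = 2 * k - 2 := by
  have hxy : x ≠ y := fun h => zero_ne_one (hx.symm.trans (h ▸ hy))
  rw [card_univ_sdiff, ZMod.card, card_pair hxy]

lemma APFree.exists_parity_notMem (hk : 2 ≤ k) {B : Finset (ZMod (2 * k))}
    (hB : APFree (2 * k) k B) :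
    ∃ x y, parity k x = 0 ∧ parity k y = 1 ∧ x ∉ B ∧ y ∉ B := by
  have hnotMem (t : ZMod (2 * k)) : ∃ x ∉ B, parity k x = parity k t := by
    obtain ⟨x, hx, hxB⟩ := hB.exists_notMem ⟨2, isAPWith_progression_two hk t⟩
    exact ⟨x, hxB, parity_of_mem_progression (by rw [map_ofNat]; rfl) hx⟩
  obtain ⟨x, hxB, hx⟩ := hnotMem 0
  obtain ⟨y, hyB, hy⟩ := hnotMem 1
  exact ⟨x, y, by rw [hx, map_zero], by rw [hy, map_one], hxB, hyB⟩

lemma APFree.card_le (hk : 2 ≤ k) {B : Finset (ZMod (2 * k))} (hB : APFree (2 * k) k B) :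
    B.card ≤ 2 * k - 2 := by
  have : NeZero k := ⟨by omega⟩
  obtain ⟨x, y, hx, hy, hxB, hyB⟩ := hB.exists_parity_notMem hk
  have hsub : B ⊆ univ \ {x, y} := subset_sdiff.mpr ⟨subset_univ B, by simp [hxB, hyB]⟩
  exact card_univ_sdiff_pair hx hy ▸ card_le_card hsub

lemma lt_val_sub_or_lt_val_sub [NeZero k] {x y : ZMod (2 * k)} (h0 : x - y ≠ 0)
    (hk : x - y ≠ k) : k < (x - y).val ∨ k < (y - x).val := by
  have hyx : (y - x).val = 2 * k - (x - y).val := by rw [← neg_sub, ZMod.neg_val, if_neg h0]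
  have hlt := ZMod.val_lt (x - y)
  have hne0 : (x - y).val ≠ 0 := fun h => h0 ((ZMod.val_eq_zero _).mp h)
  have hnek : (x - y).val ≠ k := fun h => hk (by rw [← ZMod.natCast_zmod_val (x - y), h])
  omega

lemma APFree.card_le_of_even (hk : 2 ≤ k) (hev : Even k) {B : Finset (ZMod (2 * k))}
    (hB : APFree (2 * k) k B) : B.card ≤ 2 * k - 3 := by
  have : NeZero k := ⟨by omega⟩
  obtain ⟨x, y, hx, hy, hxB, hyB⟩ := hB.exists_parity_notMem hk
  have hsub : B ⊆ univ \ {x, y} := subset_sdiff.mpr ⟨subset_univ B, by simp [hxB, hyB]⟩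
  by_contra! hcard
  have hBeq : B = univ \ {x, y} :=
    eq_of_subset_of_card_le hsub (by rw [card_univ_sdiff_pair hx hy]; omega)
  have hodd : parity k (x - y) = 1 := by rw [map_sub, hx, hy]; rfl
  have h0 : x - y ≠ 0 := fun h => by rw [h, map_zero] at hodd; exact zero_ne_one hodd
  have hne : x - y ≠ k := fun h => by
    rw [h, parity_natCast, ZMod.natCast_eq_zero_iff_even.mpr hev] at hodd
    exact zero_ne_one hodd
  rcases lt_val_sub_or_lt_val_sub h0 hne with h | h
  · exact hB _ (hBeq ▸ progression_one_subset_compl h) ⟨1, isAPWith_progression_one _⟩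
  · exact hB _ (hBeq ▸ pair_comm x y ▸ progression_one_subset_compl h)
      ⟨1, isAPWith_progression_one _⟩

theorem bNum_two_mul_of_odd (hk : 2 ≤ k) (hodd : Odd k) : bNum (2 * k) k = 2 * k - 2 := by
  have : NeZero k := ⟨by omega⟩
  have hk_odd : parity k k = 1 := by rw [parity_natCast, ZMod.natCast_eq_one_iff_odd]; exact hodd
  exact bNum_eq (apFree_univ_sdiff (S := {0, (k : ZMod (2 * k))}) (by simp) (by simp) (by simp)
    hk_odd) (card_univ_sdiff_pair (map_zero _) hk_odd) fun _ hB => hB.card_le hk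

theorem bNum_two_mul_of_even (hk : 2 ≤ k) (hev : Even k) : bNum (2 * k) k = 2 * k - 3 := by
  have : NeZero k := ⟨by omega⟩
  have hne : ∀ {x y : ZMod (2 * k)}, parity k x ≠ parity k y → x ≠ y :=
    fun h e => h (e ▸ rfl)
  have hk_even : parity k k = 0 := by rw [parity_natCast, ZMod.natCast_eq_zero_iff_even]; exact hev
  have h0k : (0 : ZMod (2 * k)) ≠ k := by
    rw [ne_eq, eq_comm, ZMod.natCast_eq_zero_iff]
    exact fun h => by have := Nat.le_of_dvd (by omega) h; omega
  have hcard : ({0, 1, (k : ZMod (2 * k))} : Finset _).card = 3 :=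
    card_eq_three.mpr ⟨0, 1, k, hne (by simp), h0k, hne (by simp [hk_even]), rfl⟩
  refine bNum_eq (apFree_univ_sdiff (S := {0, 1, (k : ZMod (2 * k))}) (z := 1) (by simp)
    (by simp) (by simp) (map_one _)) ?_ fun _ hB => hB.card_le_of_even hk hev
  rw [card_univ_sdiff, ZMod.card, hcard]

lemma two_mem_Ddiff (hk : 2 ≤ k) (hev : Even k) : 2 ∈ Ddiff (2 * k) k :=
  ⟨2, by omega, by omega, ⟨_, by rw [Nat.cast_ofNat]; exact isAPWith_progression_two hk 0⟩,
    (Nat.gcd_eq_left (even_iff_two_dvd.mp hev)).symm⟩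

end Parity

theorem stmt_2 (k : ℕ) (hk : 3 ≤ k) :
    (Ddiff (2 * k) k = {1} → bNum (2 * k) k = 2 * k - 2) ∧
      (Ddiff (2 * k) k = {1, 2} → bNum (2 * k) k = 2 * k - 3) := by
  refine ⟨fun hD => bNum_two_mul_of_odd (by omega) ?_,
    fun hD => bNum_two_mul_of_even (by omega) ?_⟩
  · rw [← Nat.not_even_iff_odd]
    intro hev
    simpa [hD] using two_mem_Ddiff (by omega) hev
  · exact even_iff_two_dvd.mpr (dvd_of_mem_Ddiff (by rw [hD]; simp))
end

section
/- Let m and k be positive integers with k ≥ 3 and m < k. Then b(mk,k) = mk − m if and only if every divisor of k that is greater than 1 is also greater than m. -/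
/-! Cut `ℤ/mkℤ` into the `m` disjoint windows `t + ik, …, t + ik + k - 1`; each is a `k`-term
progression of difference `1`, so the complement of an AP-free set has at least `m` points and
`b(mk, k) ≤ mk - m`. If the complement `C` has exactly `m` points, every window holds exactly one
of them, which forces `C` into a coset `c + ⟨k⟩`. A divisor `1 < g ≤ m` of `k` then gives the
progression `c + 1 + jg` (`j < k`), which avoids `C` because it stays `≡ c + 1 (mod g)`.

Conversely, if every divisor `g > 1` of `k` exceeds `m`, a `k`-term progression of difference
`d` has `gcd(d, k) ≤ gcd(d, mk) ≤ m` because its `k` terms are distinct, so `d` is a unit mod `k`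
and the progression meets `⟨k⟩`: the complement of `⟨k⟩` is AP-free. -/

open Finset

def IsAPFree (N k : ℕ) (B : Finset (ZMod N)) : Prop :=
  ∀ A ⊆ B, ¬ IsAP N k A

section

variable {N k : ℕ}

lemma isAPFree_empty (hk : k ≠ 0) : IsAPFree N k ∅ := by
  rintro A hA ⟨d, hcard, -⟩
  rw [subset_empty.1 hA, card_empty] at hcard
  exact hk hcard.symm

lemma bddAbove_isAPFree_cards [NeZero N] :
    BddAbove {n | ∃ B : Finset (ZMod N), #B = n ∧ IsAPFree N k B} := by
  refine ⟨N, ?_⟩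
  rintro _ ⟨B, rfl, -⟩
  simpa using card_le_univ B

lemma card_le_bNum [NeZero N] {B : Finset (ZMod N)} (hB : IsAPFree N k B) : #B ≤ bNum N k :=
  le_csSup bddAbove_isAPFree_cards ⟨B, rfl, hB⟩

lemma exists_isAPFree_card_eq_bNum [NeZero N] (hk : k ≠ 0) :
    ∃ B : Finset (ZMod N), IsAPFree N k B ∧ #B = bNum N k := by
  obtain ⟨B, hcard, hB⟩ :
      bNum N k ∈ {n | ∃ B : Finset (ZMod N), #B = n ∧ IsAPFree N k B} :=
    Nat.sSup_mem ⟨0, ∅, card_empty, isAPFree_empty hk⟩ bddAbove_isAPFree_cards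
  exact ⟨B, hB, hcard⟩

lemma IsAPFree.inter_compl_nonempty [NeZero N] {B A : Finset (ZMod N)} {d : ZMod N}
    (hB : IsAPFree N k B) (hA : IsAPWith N k A d) : (Bᶜ ∩ A).Nonempty := by
  obtain ⟨x, hxA, hxB⟩ := not_subset.1 fun hAB => hB A hAB ⟨d, hA⟩
  exact ⟨x, mem_inter.2 ⟨mem_compl.2 hxB, hxA⟩⟩

end

section

variable {n : ℕ}

def apSet (k : ℕ) (t d : ZMod n) : Finset (ZMod n) :=
  (range k).image fun i : ℕ => t + i * d

lemma mem_apSet {k : ℕ} {t d x : ZMod n} : x ∈ apSet k t d ↔ ∃ i < k, t + i * d = x := by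
  simp [apSet]

lemma card_apSet_eq_iff [NeZero n] {k : ℕ} {t d : ZMod n} :
    #(apSet k t d) = k ↔ k ≤ addOrderOf d := by
  constructor
  · intro hcard
    have hinj := card_image_iff.1 (hcard.trans (card_range k).symm)
    by_contra! hlt
    have hzero : addOrderOf d = 0 :=
      hinj (by simpa using hlt) (by simp; omega)
        (by simp [← nsmul_eq_mul, addOrderOf_nsmul_eq_zero])
    exact (addOrderOf_pos d).ne' hzero
  · intro hk
    rw [apSet, card_image_of_injOn, card_range]
    intro a ha b hb hab
    simp only [coe_range, Set.mem_Iio, add_right_inj, ← nsmul_eq_mul] at ha hb hab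
    exact nsmul_injOn_Iio_addOrderOf (lt_of_lt_of_le ha hk) (lt_of_lt_of_le hb hk) hab

lemma isAPWith_iff [NeZero n] {k : ℕ} {A : Finset (ZMod n)} {d : ZMod n} :
    IsAPWith n k A d ↔ k ≤ addOrderOf d ∧ ∃ t, A = apSet k t d := by
  constructor
  · rintro ⟨hcard, t, rfl⟩
    exact ⟨card_apSet_eq_iff.1 hcard, t, rfl⟩
  · rintro ⟨hk, t, rfl⟩
    exact ⟨card_apSet_eq_iff.2 hk, t, rfl⟩

end

section

variable {n m k : ℕ}

lemma disjoint_apSet_one (hmk : m * k ≤ n) (t : ZMod n) {i i' : ℕ} (hi : i < m) (hi' : i' < m)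
    (hne : i ≠ i') :
    Disjoint (apSet k (t + (i * k : ZMod n)) 1) (apSet k (t + (i' * k : ZMod n)) 1) := by
  rw [disjoint_left]
  intro x hx hx'
  obtain ⟨j, hj, rfl⟩ := mem_apSet.1 hx
  obtain ⟨j', hj', he⟩ := mem_apSet.1 hx'
  have hcast : ((i' * k + j' : ℕ) : ZMod n) = ((i * k + j : ℕ) : ZMod n) := by
    push_cast at he ⊢
    linear_combination he
  have hlt : ∀ {a b : ℕ}, a < m → b < k → a * k + b < n := fun ha hb => by
    nlinarith [Nat.mul_le_mul_right k (Nat.succ_le_of_lt ha)]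
  have heq : i' * k + j' = i * k + j := by
    have := (ZMod.natCast_eq_natCast_iff' _ _ n).1 hcast
    rwa [Nat.mod_eq_of_lt (hlt hi' hj'), Nat.mod_eq_of_lt (hlt hi hj)] at this
  have hdiv : ∀ {a b : ℕ}, b < k → (a * k + b) / k = a := fun hb => by
    rw [add_comm, Nat.add_mul_div_right _ _ (by omega), Nat.div_eq_of_lt hb, zero_add]
  exact hne (by rw [← hdiv (a := i) hj, ← hdiv (a := i') hj', heq])

lemma sum_card_inter_apSet_one_le (C : Finset (ZMod n)) (hmk : m * k ≤ n) (t : ZMod n) :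
    ∑ i ∈ range m, #(C ∩ apSet k (t + (i * k : ZMod n)) 1) ≤ #C := by
  rw [← card_biUnion]
  · exact card_le_card (biUnion_subset.2 fun _ _ => inter_subset_left)
  · intro i hi i' hi' hne
    exact (disjoint_apSet_one hmk t (mem_range.1 hi) (mem_range.1 hi') hne).mono
      inter_subset_right inter_subset_right

lemma isAPWith_apSet_one [NeZero n] (hkn : k ≤ n) (t : ZMod n) :
    IsAPWith n k (apSet k t 1) 1 :=
  isAPWith_iff.2 ⟨by rwa [ZMod.addOrderOf_one], t, rfl⟩

lemma card_add_le_of_isAPFree [NeZero n] (hmk : m * k ≤ n) (hkn : k ≤ n)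
    {B : Finset (ZMod n)} (hB : IsAPFree n k B) : #B + m ≤ n := by
  have hmeet : ∀ i ∈ range m, 1 ≤ #(Bᶜ ∩ apSet k (0 + (i * k : ZMod n)) 1) := fun i _ =>
    (hB.inter_compl_nonempty (isAPWith_apSet_one hkn _)).card_pos
  calc #B + m = #B + ∑ _i ∈ range m, 1 := by simp
    _ ≤ #B + #Bᶜ := by grw [sum_le_sum hmeet, sum_card_inter_apSet_one_le Bᶜ hmk 0]
    _ = n := by rw [card_add_card_compl, ZMod.card]

lemma card_inter_apSet_one_eq_one (hmk : m * k ≤ n) {C : Finset (ZMod n)} (hC : #C ≤ m)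
    (hmeet : ∀ t, (C ∩ apSet k t 1).Nonempty) (t : ZMod n) : #(C ∩ apSet k t 1) = 1 := by
  cases m with
  | zero => simpa [card_eq_zero.1 (Nat.le_zero.1 hC)] using hmeet t
  | succ m =>
    have hsum := sum_card_inter_apSet_one_le C hmk t
    rw [sum_range_succ', Nat.cast_zero, zero_mul, add_zero] at hsum
    have hrest : ∑ _i ∈ range m, 1 ≤
        ∑ i ∈ range m, #(C ∩ apSet k (t + ((i + 1 : ℕ) * k : ZMod n)) 1) :=
      sum_le_sum fun _ _ => (hmeet _).card_pos
    have := (hmeet t).card_pos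
    simp only [sum_const, card_range, smul_eq_mul, mul_one] at hrest
    omega

lemma add_mem_of_card_inter_apSet_one (hkn : k ≤ n) {C : Finset (ZMod n)}
    (h1 : ∀ t, #(C ∩ apSet k t 1) = 1) {c : ZMod n} (hc : c ∈ C) : c + k ∈ C := by
  obtain ⟨y, hy⟩ := card_eq_one.1 (h1 (c + 1))
  have hyW : y ∈ C ∩ apSet k (c + 1) 1 := by
    rw [hy]
    exact mem_singleton_self y
  obtain ⟨hyC, j, hj, rfl⟩ := mem_inter.1 hyW |>.imp_right mem_apSet.1
  obtain hjk | hjk : j + 1 < k ∨ j + 1 = k := by omega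
  · -- the point of `C` in the window at `c + 1` would be a second point in the window at `c`
    have hcc : c + 1 + j * 1 = c := card_le_one.1 (h1 c).le _
      (mem_inter.2 ⟨hyC, mem_apSet.2 ⟨j + 1, hjk, by push_cast; ring⟩⟩) _
      (mem_inter.2 ⟨hc, mem_apSet.2 ⟨0, by omega, by simp⟩⟩)
    have h0 : ((j + 1 : ℕ) : ZMod n) = 0 := by
      push_cast
      linear_combination hcc
    rw [ZMod.natCast_eq_zero_iff] at h0
    exact absurd (Nat.le_of_dvd (by omega) h0) (by omega)
  · convert hyC using 1
    rw [← hjk]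
    push_cast
    ring

lemma exists_eq_add_mul_of_card_inter_apSet_one [NeZero n] (hkn : k ≤ n) {C : Finset (ZMod n)}
    (h1 : ∀ t, #(C ∩ apSet k t 1) = 1) {c x : ZMod n} (hc : c ∈ C) (hx : x ∈ C) :
    ∃ q : ℕ, x = c + q * k := by
  have hk : 0 < k := by
    by_contra! hk
    simpa [apSet, Nat.le_zero.1 hk] using h1 0
  have hstep : ∀ q : ℕ, c + q * k ∈ C := by
    intro q
    induction q with
    | zero => simpa using hc
    | succ q ih =>
      convert add_mem_of_card_inter_apSet_one hkn h1 ih using 1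
      push_cast
      ring
  set v := (x - c).val
  have hv : ((v / k : ℕ) : ZMod n) * k + (v % k : ℕ) = x - c := by
    rw [← ZMod.natCast_zmod_val (x - c)]
    exact_mod_cast congrArg (Nat.cast : ℕ → ZMod n) (Nat.div_add_mod' v k)
  refine ⟨v / k, card_le_one.1 (h1 (c + (v / k : ℕ) * k)).le x ?_ _ ?_⟩
  · exact mem_inter.2 ⟨hx, mem_apSet.2 ⟨v % k, Nat.mod_lt _ hk, by linear_combination hv⟩⟩
  · exact mem_inter.2 ⟨hstep _, mem_apSet.2 ⟨0, hk, by simp⟩⟩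

end

lemma exists_lt_add_mul_eq_zero {n : ℕ} [NeZero n] (s : ZMod n) {u : ZMod n} (hu : IsUnit u) :
    ∃ j < n, s + j * u = 0 := by
  obtain ⟨u, rfl⟩ := hu
  refine ⟨(-s * ↑u⁻¹).val, ZMod.val_lt _, ?_⟩
  rw [ZMod.natCast_zmod_val, mul_assoc, Units.inv_mul, mul_one, add_neg_cancel]

section

variable {m k : ℕ} [NeZero (m * k)]

lemma lt_of_dvd_of_isAPFree {g : ℕ} {B : Finset (ZMod (m * k))} (hB : IsAPFree (m * k) k B)
    (hcard : #B = m * k - m) (hgk : g ∣ k) (hg : 1 < g) : m < g := by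
  have hm : 0 < m := Nat.pos_of_mul_pos_right (NeZero.pos (m * k))
  have hk : 0 < k := Nat.pos_of_mul_pos_left (NeZero.pos (m * k))
  have hkN : k ≤ m * k := Nat.le_mul_of_pos_left k hm
  have hC : #Bᶜ = m := by
    rw [card_compl, ZMod.card, hcard]
    have := Nat.le_mul_of_pos_right m hk
    omega
  have h1 := card_inter_apSet_one_eq_one le_rfl hC.le
    fun t => hB.inter_compl_nonempty (isAPWith_apSet_one hkN t)
  obtain ⟨c, hc⟩ := card_pos.1 (by omega : 0 < #Bᶜ)
  by_contra! hgm
  have hgN : g ∣ m * k := hgk.trans (dvd_mul_left k m)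
  have hord : k ≤ addOrderOf (g : ZMod (m * k)) := by
    rw [ZMod.addOrderOf_coe _ (NeZero.ne _), Nat.gcd_eq_right hgN,
      Nat.le_div_iff_mul_le (by omega), mul_comm m k]
    exact Nat.mul_le_mul_left k hgm
  -- `Bᶜ ⊆ c + ⟨k⟩` is `≡ c (mod g)`, the progression `c + 1 + j * g` is `≡ c + 1 (mod g)`
  obtain ⟨x, hx⟩ := hB.inter_compl_nonempty (isAPWith_iff.2 ⟨hord, c + 1, rfl⟩)
  obtain ⟨hxC, hxA⟩ := mem_inter.1 hx
  obtain ⟨j, -, rfl⟩ := mem_apSet.1 hxA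
  obtain ⟨q, hq⟩ := exists_eq_add_mul_of_card_inter_apSet_one hkN h1 hc hxC
  have hcast : ((1 + j * g : ℕ) : ZMod (m * k)) = ((q * k : ℕ) : ZMod (m * k)) := by
    push_cast
    linear_combination hq
  have hmod := ((ZMod.natCast_eq_natCast_iff _ _ _).1 hcast).of_dvd hgN
  rw [Nat.ModEq, Nat.add_mul_mod_self_right, Nat.mod_eq_of_lt hg,
    Nat.mod_eq_zero_of_dvd (dvd_mul_of_dvd_right hgk q)] at hmod
  exact one_ne_zero hmod

lemma gcd_val_le_of_le_addOrderOf {d : ZMod (m * k)} (h : k ≤ addOrderOf d) :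
    d.val.gcd k ≤ m := by
  rw [← ZMod.natCast_zmod_val d, ZMod.addOrderOf_coe _ (NeZero.ne _)] at h
  have hx : 0 < (m * k).gcd d.val := Nat.gcd_pos_of_pos_left _ (Nat.pos_of_ne_zero (NeZero.ne _))
  have hxm : (m * k).gcd d.val ≤ m := by
    rw [Nat.le_div_iff_mul_le hx] at h
    exact Nat.le_of_mul_le_mul_left (by linarith [mul_comm m k])
      (Nat.pos_of_mul_pos_left (NeZero.pos (m * k)))
  exact (Nat.le_of_dvd hx (Nat.dvd_gcd ((Nat.gcd_dvd_right _ _).trans (dvd_mul_left k m))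
    (Nat.gcd_dvd_left _ _))).trans hxm

lemma card_apSet_natCast : #(apSet m 0 (k : ZMod (m * k))) = m := by
  rw [card_apSet_eq_iff, ZMod.addOrderOf_coe _ (NeZero.ne _), Nat.gcd_eq_right (dvd_mul_left k m),
    Nat.mul_div_cancel m (Nat.pos_of_mul_pos_left (NeZero.pos (m * k)))]

lemma mem_apSet_natCast_of_castHom_eq_zero {x : ZMod (m * k)}
    (hx : ZMod.castHom (dvd_mul_left k m) (ZMod k) x = 0) : x ∈ apSet m 0 (k : ZMod (m * k)) := by
  rw [ZMod.castHom_apply, ZMod.cast_eq_val, ZMod.natCast_eq_zero_iff] at hx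
  obtain ⟨q, hq⟩ := hx
  have hqm : q < m := by
    have := ZMod.val_lt x
    rw [hq, mul_comm m k] at this
    exact Nat.lt_of_mul_lt_mul_left this
  refine mem_apSet.2 ⟨q, hqm, ?_⟩
  rw [zero_add, ← ZMod.natCast_zmod_val x, hq]
  push_cast
  ring

lemma isAPFree_compl_apSet_natCast (hdiv : ∀ g : ℕ, g ∣ k → 1 < g → m < g) :
    IsAPFree (m * k) k (apSet m 0 (k : ZMod (m * k)))ᶜ := by
  have hk : 0 < k := Nat.pos_of_mul_pos_left (NeZero.pos (m * k))
  have : NeZero k := ⟨hk.ne'⟩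
  rintro A hAB ⟨d, hA⟩
  obtain ⟨hord, t, rfl⟩ := isAPWith_iff.1 hA
  have hcop : d.val.Coprime k := by
    by_contra hne
    have hpos := Nat.gcd_pos_of_pos_right d.val hk
    have := hdiv (d.val.gcd k) (Nat.gcd_dvd_right _ _) (by rw [Nat.Coprime] at hne; omega)
    have := gcd_val_le_of_le_addOrderOf hord
    omega
  set φ := ZMod.castHom (dvd_mul_left k m) (ZMod k)
  have hu : IsUnit (φ d) := by
    rw [← ZMod.natCast_zmod_val d, map_natCast]
    exact (ZMod.isUnit_iff_coprime _ _).2 hcop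
  obtain ⟨j, hj, hzero⟩ := exists_lt_add_mul_eq_zero (φ t) hu
  refine mem_compl.1 (hAB (mem_apSet.2 ⟨j, hj, rfl⟩)) (mem_apSet_natCast_of_castHom_eq_zero ?_)
  rw [map_add, map_mul, map_natCast, hzero]

end

theorem stmt_6_general (m k : ℕ) (hm : 0 < m) (hk : 3 ≤ k) :
    bNum (m * k) k = m * k - m ↔ ∀ g : ℕ, g ∣ k → 1 < g → m < g := by
  have : NeZero (m * k) := ⟨by positivity⟩
  obtain ⟨B, hB, hcard⟩ := exists_isAPFree_card_eq_bNum (N := m * k) (by omega : k ≠ 0)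
  constructor
  · intro hb g hgk hg
    exact lt_of_dvd_of_isAPFree hB (hcard.trans hb) hgk hg
  · intro hdiv
    have hle := card_add_le_of_isAPFree le_rfl (Nat.le_mul_of_pos_left k hm) hB
    have hge := card_le_bNum (isAPFree_compl_apSet_natCast hdiv)
    rw [card_compl, ZMod.card, card_apSet_natCast] at hge
    omega

theorem stmt_6 (m k : ℕ) (hm : 0 < m) (hk : 3 ≤ k) (hmk : m < k) :
    bNum (m * k) k = m * k - m ↔ ∀ g : ℕ, g ∣ k → 1 < g → m < g :=
  stmt_6_general m k hm hk
end

section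
/- Let m and k be positive integers with k ≥ 3. Write D(mk,k) = {d_0 < d_1 < ⋯ < d_j} and set d_{-1} := 0. For each i ∈ {0,…,j}, define F_i := ⋃_{α = d_{i−1}+1}^{d_i} {d_i·k − α, (d_i+1)·k − α, …, m·k − α} ⊆ Z_{mk}, and let F := ⋃_{i=0}^{j} F_i. Then B := Z_{mk} \ F contains no k-term cyclic arithmetic progression mod mk. -/
/-!
Let `A = {t + l d : l < k}` avoid `F` and put `g = gcd(d, k)`, which lies in `D(mk, k)`, say
`g = d_i`. Reduced mod `k`, the terms of `A` run over the class of `t` mod `g`, each residue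
being hit by exactly `g` values of `l` (the map `l ↦ l d mod k` has period `k / g`). Pick
`1 ≤ α ≤ g` with `g ∣ t + α`: at least `g` terms of `A` are `≡ -α (mod k)`, i.e. of the form
`x k - α` with `1 ≤ x ≤ m`. If `d_{i'-1} < α ≤ d_{i'}` (so `i' ≤ i`), every such element with
`x ≥ d_{i'}` lies in `F_{i'}`, leaving fewer than `d_{i'} ≤ g` candidates for `A`.
-/

open Finset

theorem Nat.exists_mem_Icc_dvd_add {g : ℕ} (hg : 0 < g) (n : ℕ) :
    ∃ α, 1 ≤ α ∧ α ≤ g ∧ g ∣ n + α := by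
  have hdiv := Nat.mod_add_div n g
  have hlt := Nat.mod_lt n hg
  exact ⟨g - n % g, by omega, by omega, n / g + 1, by rw [mul_add, mul_one]; omega⟩

theorem Nat.exists_dvd_mul_add {d k c : ℕ} (hk : 0 < k) (hc : Nat.gcd d k ∣ c) :
    ∃ L, k ∣ L * d + c := by
  obtain ⟨s, rfl⟩ := hc
  -- Bézout: `gcd d k = d * gcdA d k + k * gcdB d k`
  set L : ℤ := -(s * Nat.gcdA d k) % k
  have hL : 0 ≤ L := Int.emod_nonneg _ (by omega)
  refine ⟨L.toNat, Int.natCast_dvd_natCast.1 ?_⟩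
  push_cast
  rw [Int.toNat_of_nonneg hL, ← Int.modEq_zero_iff_dvd]
  refine (((Int.mod_modEq _ _).mul_right _).add_right _).trans ?_
  rw [Nat.gcd_eq_gcd_ab d k, Int.modEq_zero_iff_dvd]
  exact ⟨s * Nat.gcdB d k, by ring⟩

theorem Nat.gcd_le_card_filter_dvd_mul_add {d k c : ℕ} (hk : 0 < k) (hc : Nat.gcd d k ∣ c) :
    Nat.gcd d k ≤ #{l ∈ range k | k ∣ l * d + c} := by
  set g := Nat.gcd d k
  obtain ⟨L, hL⟩ := Nat.exists_dvd_mul_add hk hc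
  obtain ⟨k₁, hk₁⟩ : g ∣ k := Nat.gcd_dvd_right d k
  have hk₁0 : 0 < k₁ := Nat.pos_of_mul_pos_left (hk₁ ▸ hk)
  -- `k ∣ k₁ * d`, so `L % k₁ + s * k₁` is a solution for every `s`
  have hsol : ∀ s, k ∣ (L % k₁ + s * k₁) * d + c := by
    intro s
    have hmod : L % k₁ + s * k₁ ≡ L [MOD k₁] := by
      simp only [Nat.ModEq, Nat.add_mul_mod_self_right, Nat.mod_mod]
    have hkd : k ∣ k₁ * d := hk₁ ▸ mul_comm g k₁ ▸ mul_dvd_mul_left k₁ (Nat.gcd_dvd_left d k)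
    have := ((hmod.mul_right' d).of_dvd hkd).add_right c
    exact (this.dvd_iff dvd_rfl).2 hL
  calc g = #((range g).image fun s => L % k₁ + s * k₁) := by
        rw [Finset.card_image_of_injective _ fun s s' h => by simpa [hk₁0.ne'] using h,
          card_range]
    _ ≤ _ := by
      refine card_le_card fun l hl => ?_
      obtain ⟨s, hs, rfl⟩ := mem_image.1 hl
      refine mem_filter.2 ⟨mem_range.2 ?_, hsol s⟩
      have := Nat.mod_lt L hk₁0
      have : (s + 1) * k₁ ≤ g * k₁ := Nat.mul_le_mul_right _ (mem_range.1 hs)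
      rw [hk₁]; linarith [add_mul s 1 k₁]

theorem ZMod.val_add_natCast_mul_modEq {N k : ℕ} [NeZero N] (hkN : k ∣ N) (t d : ZMod N)
    (l : ℕ) :
    (t + l * d).val ≡ t.val + l * d.val [MOD k] := by
  have : t + l * d = ((t.val + l * d.val : ℕ) : ZMod N) := by
    push_cast [ZMod.natCast_zmod_val]; rfl
  rw [this, ZMod.val_natCast]
  exact Nat.mod_mod_of_dvd _ hkN

theorem gcd_le_card_filter_dvd_val_add {N k : ℕ} [NeZero N] (hkN : k ∣ N) (t d : ZMod N)
    (hinj : #((range k).image fun l : ℕ => t + l * d) = k) {c : ℕ}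
    (hc : Nat.gcd d.val k ∣ t.val + c) :
    Nat.gcd d.val k ≤ #{a ∈ (range k).image (fun l : ℕ => t + l * d) | k ∣ a.val + c} := by
  have hk : 0 < k := Nat.pos_of_ne_zero <| by rintro rfl; exact NeZero.ne N (zero_dvd_iff.1 hkN)
  rw [filter_image, card_image_of_injOn]
  · refine (Nat.gcd_le_card_filter_dvd_mul_add hk hc).trans_eq (congrArg card (filter_congr ?_))
    intro l _
    rw [((ZMod.val_add_natCast_mul_modEq hkN t d l).add_right c).dvd_iff dvd_rfl]
    ring_nf
  · exact (card_image_iff.1 (hinj.trans (card_range k).symm)).mono (filter_subset _ _)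

theorem ZMod.exists_eq_natCast_mul_sub {m k α : ℕ} [NeZero (m * k)] (hα : 1 ≤ α) (hαk : α ≤ k)
    {a : ZMod (m * k)} (ha : k ∣ a.val + α) :
    ∃ x, 1 ≤ x ∧ x ≤ m ∧ a = ((x * k - α : ℕ) : ZMod (m * k)) := by
  obtain ⟨x, hx⟩ := ha
  have hlt : k * x < k * (m + 1) := by linarith [a.val_lt, mul_comm m k]
  refine ⟨x, Nat.pos_of_ne_zero ?_, Nat.lt_succ_iff.1 (Nat.lt_of_mul_lt_mul_left hlt), ?_⟩
  · rintro rfl; omega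
  · have hval : x * k - α = a.val := by rw [mul_comm, ← hx, Nat.add_sub_cancel]
    rw [hval, ZMod.natCast_zmod_val]

theorem card_filter_dvd_val_add_le {m k α E : ℕ} [NeZero (m * k)] (hα : 1 ≤ α) (hαk : α ≤ k)
    (S : Finset (ZMod (m * k)))
    (hS : ∀ x, E ≤ x → x ≤ m → ((x * k - α : ℕ) : ZMod (m * k)) ∉ S) :
    #{a ∈ S | k ∣ a.val + α} ≤ E - 1 := by
  calc #{a ∈ S | k ∣ a.val + α}
      ≤ #((Ico 1 E).image fun x => ((x * k - α : ℕ) : ZMod (m * k))) := by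
        refine card_le_card fun a ha => ?_
        obtain ⟨haS, hka⟩ := mem_filter.1 ha
        obtain ⟨x, hx1, hxm, rfl⟩ := ZMod.exists_eq_natCast_mul_sub hα hαk hka
        exact mem_image.2 ⟨x, mem_Ico.2 ⟨hx1, not_le.1 fun hEx => hS x hEx hxm haS⟩, rfl⟩
    _ ≤ E - 1 := card_image_le.trans (Nat.card_Ico 1 E).le

theorem IsAPWith.ne_zero {N k : ℕ} {A : Finset (ZMod N)} {d : ZMod N} (hk : 2 ≤ k)
    (h : IsAPWith N k A d) : d ≠ 0 := by
  rintro rfl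
  obtain ⟨hcard, t, rfl⟩ := h
  simp only [mul_zero, add_zero, image_const (nonempty_range_iff.2 (by omega : k ≠ 0)),
    card_singleton] at hcard
  omega

theorem IsAPWith.gcd_val_mem_Ddiff {N k : ℕ} [NeZero N] {A : Finset (ZMod N)} {d : ZMod N}
    (h : IsAPWith N k A d) (hd : d ≠ 0) : Nat.gcd d.val k ∈ Ddiff N k := by
  have := d.val_lt
  have := (ZMod.val_pos (n := N)).2 hd
  exact ⟨d.val, by omega, by omega, ⟨A, (ZMod.natCast_zmod_val d).symm ▸ h⟩, rfl⟩

theorem exists_lt_and_le_succ {β : Type*} [LinearOrder β] {e : ℕ → β} {α : β} {n : ℕ}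
    (h0 : e 0 < α) (hn : α ≤ e n) : ∃ i < n, e i < α ∧ α ≤ e (i + 1) := by
  induction n with
  | zero => exact absurd hn (not_le.2 h0)
  | succ n ih =>
    rcases lt_or_ge (e n) α with h | h
    · exact ⟨n, n.lt_succ_self, h, hn⟩
    · obtain ⟨i, hi, hei⟩ := ih h
      exact ⟨i, hi.trans n.lt_succ_self, hei⟩

theorem stmt_11 (m k : ℕ) (hm : 0 < m) (hk : 3 ≤ k) (j : ℕ) (e : ℕ → ℕ)
    (he0 : e 0 = 0)
    (hmono : ∀ i ≤ j, e i < e (i + 1))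
    (hD : Ddiff (m * k) k = {x | ∃ i, 1 ≤ i ∧ i ≤ j + 1 ∧ x = e i})
    (F : ℕ → Finset (ZMod (m * k)))
    (hF : ∀ i, F i =
      Finset.image (fun p : ℕ × ℕ => ((p.1 * k - p.2 : ℕ) : ZMod (m * k)))
        ((Finset.Icc (e (i + 1)) m) ×ˢ (Finset.Icc (e i + 1) (e (i + 1))))) :
    ∀ A : Finset (ZMod (m * k)),
      (∀ x ∈ A, x ∉ (Finset.range (j + 1)).biUnion F) → ¬ IsAP (m * k) k A := by
  rintro A hAF ⟨d, hAP⟩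
  have hk0 : 0 < k := by omega
  have : NeZero (m * k) := ⟨(Nat.mul_pos hm hk0).ne'⟩
  set g := Nat.gcd d.val k
  have hg0 : 0 < g := Nat.gcd_pos_of_pos_right _ hk0
  have hgk : g ≤ k := Nat.le_of_dvd hk0 (Nat.gcd_dvd_right _ _)
  have hgD : g ∈ Ddiff (m * k) k := hAP.gcd_val_mem_Ddiff (hAP.ne_zero (by omega))
  obtain ⟨i, -, hij, hgi⟩ : ∃ i, 1 ≤ i ∧ i ≤ j + 1 ∧ g = e i := by rwa [hD] at hgD
  obtain ⟨hcard, t, rfl⟩ := hAP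
  obtain ⟨α, hα1, hαg, hgα⟩ := Nat.exists_mem_Icc_dvd_add hg0 t.val
  obtain ⟨i₀, hi₀, hαlow, hαup⟩ :=
    exists_lt_and_le_succ (e := e) (by omega : e 0 < α) (hgi ▸ hαg)
  have emono : MonotoneOn e (Set.Iic (j + 1)) :=
    monotoneOn_of_le_succ Set.ordConnected_Iic fun a _ _ ha => by
      rw [Order.succ_eq_add_one, Set.mem_Iic] at ha
      rw [Order.succ_eq_add_one]
      exact (hmono a (by omega)).le
  have hEg : e (i₀ + 1) ≤ g := hgi ▸ emono (Set.mem_Iic.2 (by omega)) (Set.mem_Iic.2 hij) hi₀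
  have hlower := gcd_le_card_filter_dvd_val_add (dvd_mul_left k m) t d hcard hgα
  have hupper := card_filter_dvd_val_add_le (E := e (i₀ + 1)) hα1 (hαg.trans hgk) _
    fun x hEx hxm hxA => hAF _ hxA <| mem_biUnion.2 ⟨i₀, mem_range.2 (by omega),
      hF i₀ ▸ mem_image.2 ⟨(x, α), mem_product.2 ⟨mem_Icc.2 ⟨hEx, hxm⟩, mem_Icc.2 ⟨hαlow, hαup⟩⟩,
        rfl⟩⟩
  omega
end

section
/- If p ≥ 3 is prime, then (p−1)² ≤ b(p²,p) ≤ p(p−1). -/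
/-!
Reduce modulo `p`, `ZMod (p ^ 2) → ZMod p`. A `p`-term progression whose difference has nonzero
residue meets every residue class, in particular `0`; one whose difference has residue `0` fills a
whole fibre of the reduction. So deleting the fibre over `0` and one point of every other fibre
leaves a progression-free set of size `(p - 1) ^ 2`. Conversely every fibre is itself a `p`-term
progression (with difference `p`), so a progression-free set misses a point in each of the `p`
fibres.
-/

open Finset

lemma le_bNum {N k : ℕ} [NeZero N] {B : Finset (ZMod N)} (hB : ∀ A ⊆ B, ¬ IsAP N k A) :
    B.card ≤ bNum N k := by
  refine le_csSup ⟨N, ?_⟩ ⟨B, rfl, hB⟩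
  rintro n ⟨C, rfl, -⟩
  simpa using C.card_le_univ

lemma bNum_le {N k m : ℕ}
    (h : ∀ B : Finset (ZMod N), (∀ A ⊆ B, ¬ IsAP N k A) → B.card ≤ m) : bNum N k ≤ m :=
  csSup_le' fun _ ⟨B, hcard, hB⟩ => hcard ▸ h B hB

section Residue

variable {p : ℕ}

def residue (p : ℕ) : ZMod (p ^ 2) →+* ZMod p :=
  ZMod.castHom (dvd_pow_self p two_ne_zero) (ZMod p)

lemma residue_natCast (n : ℕ) : residue p n = n :=
  map_natCast _ n

lemma residue_val_natCast [NeZero p] (r : ZMod p) : residue p (r.val : ZMod (p ^ 2)) = r := by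
  rw [residue_natCast, ZMod.natCast_zmod_val]

def residueFiber (p : ℕ) [NeZero p] (r : ZMod p) : Finset (ZMod (p ^ 2)) :=
  {x | residue p x = r}

lemma mem_residueFiber [NeZero p] {r : ZMod p} {x : ZMod (p ^ 2)} :
    x ∈ residueFiber p r ↔ residue p x = r := by
  simp [residueFiber]

lemma residueFiber_eq_image [NeZero p] (r : ZMod p) :
    residueFiber p r = (range p).image fun i : ℕ => (r.val : ZMod (p ^ 2)) + i * p := by
  ext x
  simp only [mem_residueFiber, mem_image, mem_range]
  constructor
  · rintro rfl
    have hx : x.val < p * p := by simpa [sq] using x.val_lt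
    refine ⟨x.val / p, Nat.div_lt_of_lt_mul hx, ?_⟩
    have hval : (residue p x).val = x.val % p := by
      rw [residue, ZMod.castHom_apply, ZMod.cast_eq_val, ZMod.val_natCast]
    rw [hval]
    conv_rhs => rw [← ZMod.natCast_zmod_val x, ← Nat.mod_add_div x.val p]
    push_cast
    ring
  · rintro ⟨i, -, rfl⟩
    simp

lemma card_residueFiber [NeZero p] (r : ZMod p) : (residueFiber p r).card = p := by
  rw [residueFiber_eq_image, card_image_of_injOn, card_range]
  intro i hi j hj hij
  simp only [coe_range, Set.mem_Iio] at hi hj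
  have hp : 0 < p := Nat.pos_of_neZero p
  have hij' : ((i * p : ℕ) : ZMod (p ^ 2)) = (j * p : ℕ) := by
    push_cast
    simpa using hij
  rw [ZMod.natCast_eq_natCast_iff', Nat.mod_eq_of_lt, Nat.mod_eq_of_lt] at hij'
  · exact Nat.eq_of_mul_eq_mul_right hp hij'
  all_goals rw [sq]; exact Nat.mul_lt_mul_of_pos_right ‹_› hp

lemma isAPWith_residueFiber [NeZero p] (r : ZMod p) :
    IsAPWith (p ^ 2) p (residueFiber p r) p :=
  ⟨card_residueFiber r, r.val, residueFiber_eq_image r⟩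

lemma exists_residue_add_mul_eq [Fact p.Prime] (t : ZMod (p ^ 2)) {d : ZMod (p ^ 2)}
    (hd : residue p d ≠ 0) (r : ZMod p) :
    ∃ i < p, residue p (t + (i : ZMod (p ^ 2)) * d) = r := by
  refine ⟨((r - residue p t) / residue p d).val, ZMod.val_lt _, ?_⟩
  rw [map_add, map_mul, residue_natCast, ZMod.natCast_zmod_val]
  field_simp
  ring

end Residue

section UpperBound

variable {p : ℕ} [NeZero p]

lemma bNum_sq_le_mul_pred : bNum (p ^ 2) p ≤ p * (p - 1) := by
  refine bNum_le fun B hB => ?_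
  have hsurj : Set.SurjOn (residue p) ↑Bᶜ ↑(univ : Finset (ZMod p)) := by
    intro r _
    obtain ⟨x, hxr, hxB⟩ := not_subset.mp fun h => hB _ h ⟨p, isAPWith_residueFiber r⟩
    exact ⟨x, mem_compl.mpr hxB, mem_residueFiber.mp hxr⟩
  have hcompl : p ≤ Bᶜ.card := by
    simpa using card_le_card_of_surjOn _ hsurj
  have := card_compl_add_card B
  rw [ZMod.card] at this
  rw [Nat.mul_sub_one, ← sq]
  omega

end UpperBound

section LowerBound

variable {p : ℕ}

def apFreeSet (p : ℕ) [NeZero p] : Finset (ZMod (p ^ 2)) :=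
  {x | residue p x ≠ 0 ∧ x ≠ ((residue p x).val : ZMod (p ^ 2))}

lemma card_apFreeSet [NeZero p] : (apFreeSet p).card = (p - 1) ^ 2 := by
  have hfiber : ∀ r : ZMod p, r ≠ 0 →
      {x ∈ apFreeSet p | residue p x = r} = (residueFiber p r).erase (r.val : ZMod (p ^ 2)) := by
    intro r hr
    ext x
    simp only [apFreeSet, residueFiber, mem_filter, mem_erase, mem_univ, true_and]
    constructor
    · rintro ⟨⟨-, hx⟩, rfl⟩
      exact ⟨hx, rfl⟩
    · rintro ⟨hx, rfl⟩
      exact ⟨⟨hr, hx⟩, rfl⟩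
  have hmaps : Set.MapsTo (residue p) ↑(apFreeSet p) ↑({r | r ≠ 0} : Finset (ZMod p)) :=
    fun x hx => by simpa using (mem_filter.mp hx).2.1
  rw [card_eq_sum_card_fiberwise hmaps,
    sum_congr rfl fun r hr => by rw [hfiber r (by simpa using hr)]]
  simp only [card_erase_of_mem (mem_residueFiber.mpr (residue_val_natCast _)), card_residueFiber]
  rw [sum_const, smul_eq_mul, filter_ne', card_erase_of_mem (mem_univ _), card_univ, ZMod.card,
    sq]

lemma not_isAP_of_subset_apFreeSet [Fact p.Prime] {A : Finset (ZMod (p ^ 2))}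
    (hA : A ⊆ apFreeSet p) : ¬ IsAP (p ^ 2) p A := by
  rintro ⟨d, hcard, t, hAt⟩
  by_cases hd : residue p d = 0
  · have hsub : A ⊆ residueFiber p (residue p t) := by
      rw [hAt]
      intro x hx
      obtain ⟨i, -, rfl⟩ := mem_image.mp hx
      simp [mem_residueFiber, hd]
    have hfull := eq_of_subset_of_card_le hsub (by rw [card_residueFiber, hcard])
    have hrep : ((residue p t).val : ZMod (p ^ 2)) ∈ A :=
      hfull ▸ mem_residueFiber.mpr (residue_val_natCast _)
    exact (mem_filter.mp (hA hrep)).2.2 (by rw [residue_val_natCast])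
  · obtain ⟨i, hi, hzero⟩ := exists_residue_add_mul_eq t hd 0
    have hmem : t + (i : ZMod (p ^ 2)) * d ∈ A := hAt ▸ mem_image_of_mem _ (mem_range.mpr hi)
    exact (mem_filter.mp (hA hmem)).2.1 hzero

lemma sq_pred_le_bNum [Fact p.Prime] : (p - 1) ^ 2 ≤ bNum (p ^ 2) p :=
  card_apFreeSet (p := p) ▸ le_bNum fun _ hA => not_isAP_of_subset_apFreeSet hA

end LowerBound

theorem stmt_12_general (p : ℕ) (hp : p.Prime) :
    (p - 1) ^ 2 ≤ bNum (p ^ 2) p ∧ bNum (p ^ 2) p ≤ p * (p - 1) :=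
  have : Fact p.Prime := ⟨hp⟩
  ⟨sq_pred_le_bNum, bNum_sq_le_mul_pred⟩

theorem stmt_12 (p : ℕ) (hp : p.Prime) (hp3 : 3 ≤ p) :
    (p - 1) ^ 2 ≤ bNum (p ^ 2) p ∧ bNum (p ^ 2) p ≤ p * (p - 1) :=
  stmt_12_general p hp
end
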